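/- Reduced measure formula: let μ be 1/r-excessive for a transient transfer operator with 0 < r ≤ R, and let A be a set measurable with respect to the partition into n-cylinders. Define 𝓕_A := 𝟙_A Σ_{n≥0} r^n (𝓛_{A^c})^n where 𝓛_B(f) := 𝓛(𝟙_B f). Then the reduced measure R_A(μ) := ⋀{ ν : ν is 1/r-excessive and ν|_A ≥ μ|_A } equals 𝓕_A*(μ). -/

import Mathlib

/-!
Write `D ν = (L ν)|_{Aᶜ}`, `m_n = cⁿ Dⁿ(μ|_A)` and `S_N = ∑_{n<N} m_n`, so that
`S_{N+1} = c D S_N + μ|_A`. If `ν` is excessive (`c L ν ≤ ν`) and dominates `μ` on `A`, induction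
gives `S_N ≤ ν|_{Aᶜ} + ν|_A = ν`, hence `F = ∑ m_n ≤ ν`; in particular `F ≤ μ`.

Excessivity of `F` itself is the delicate part, because `L` is only finitely additive. Splitting
`F = S_N + ∑_k m_{k+N}` gives `c L S_N ≤ S_{N+1} ≤ F` (on `A` use `c L S_N ≤ c L μ ≤ μ`) and
`∑_k m_{k+N} ≤ cᴺ Lᴺ μ`, so `c L F ≤ F + c^{N+1} L^{N+1} μ` for every `N`. The error term is a
term of the Green series, so it tends to zero on every set of finite Green measure, and
σ-finiteness of the Green measure (transience) gives `c L F ≤ F` on all sets.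
-/

open MeasureTheory Finset Filter Topology
open scoped ENNReal

namespace MeasureTheory.Measure

variable {X : Type*} [MeasurableSpace X]

theorem sum_le_of_forall_sum_range_le {f : ℕ → Measure X} {ν : Measure X}
    (h : ∀ N, ∑ n ∈ range N, f n ≤ ν) : Measure.sum f ≤ ν := by
  refine le_iff.2 fun s hs => ?_
  rw [sum_apply _ hs, ENNReal.tsum_eq_iSup_nat]
  exact iSup_le fun N => by simpa only [finsetSum_apply] using le_iff'.1 (h N) s

theorem sum_range_add_sum_nat_add (f : ℕ → Measure X) (N : ℕ) :
    ∑ n ∈ range N, f n + Measure.sum (fun n => f (n + N)) = Measure.sum f := by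
  ext s hs
  rw [add_apply, finsetSum_apply, sum_apply _ hs, sum_apply _ hs]
  exact ENNReal.summable.sum_add_tsum_nat_add'

theorem sum_range_le_sum (f : ℕ → Measure X) (N : ℕ) : ∑ n ∈ range N, f n ≤ Measure.sum f :=
  (Measure.le_add_right le_rfl).trans_eq (sum_range_add_sum_nat_add f N)

theorem le_of_forall_measure_ne_top_le (G : Measure X) [SigmaFinite G] {α β : Measure X}
    (h : ∀ t, MeasurableSet t → G t ≠ ∞ → α t ≤ β t) : α ≤ β := by
  refine le_iff.2 fun s hs => ?_
  have hcover : ⋃ k, s ∩ spanningSets G k = s := by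
    rw [← Set.inter_iUnion, iUnion_spanningSets, Set.inter_univ]
  have hmono : Monotone fun k => s ∩ spanningSets G k := fun i j hij =>
    Set.inter_subset_inter_right _ (monotone_spanningSets G hij)
  rw [← hcover, hmono.measure_iUnion]
  refine iSup_le fun k => (h _ (hs.inter (measurableSet_spanningSets G k)) ?_).trans
    (measure_mono (Set.subset_iUnion (fun k => s ∩ spanningSets G k) k))
  exact ((measure_mono Set.inter_subset_right).trans_lt (measure_spanningSets_lt_top G k)).ne

theorem smul_le_iff_le_inv_smul {c : ℝ≥0∞} (hc0 : c ≠ 0) (hc : c ≠ ∞) {α β : Measure X} :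
    c • α ≤ β ↔ α ≤ c⁻¹ • β := by
  constructor
  · intro h
    calc α = c⁻¹ • c • α := by rw [smul_smul, ENNReal.inv_mul_cancel hc0 hc, one_smul]
      _ ≤ c⁻¹ • β := by gcongr
  · intro h
    calc c • α ≤ c • c⁻¹ • β := by gcongr
      _ = β := by rw [smul_smul, ENNReal.mul_inv_cancel hc0 hc, one_smul]

end MeasureTheory.Measure

namespace MeasureTheory

variable {X : Type*} [MeasurableSpace X] (L : Measure X →ₗ[ℝ≥0∞] Measure X) (c : ℝ≥0∞)
  (A : Set X) (μ : Measure X)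

/-- `Measure.restrictₗ Aᶜ ∘ₗ L` is the dual of the paper's `𝓛_{Aᶜ} f = 𝓛(𝟙_{Aᶜ} f)`, so
`balayage L c A μ` is `𝓕_A*(μ)` with `c = r`. -/
noncomputable def balayageTerm (n : ℕ) : Measure X :=
  c ^ n • ((Measure.restrictₗ Aᶜ ∘ₗ L) ^ n) (μ.restrict A)

noncomputable def balayage : Measure X :=
  Measure.sum (balayageTerm L c A μ)

noncomputable def greenMeasure : Measure X :=
  Measure.sum fun n => c ^ n • (L ^ n) μ

variable {L c A μ}

theorem balayageTerm_zero : balayageTerm L c A μ 0 = μ.restrict A := by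
  simp [balayageTerm]

theorem balayageTerm_add (k n : ℕ) :
    balayageTerm L c A μ (k + n) =
      c ^ n • ((Measure.restrictₗ Aᶜ ∘ₗ L) ^ n) (balayageTerm L c A μ k) := by
  rw [balayageTerm, balayageTerm, map_smul, smul_smul, ← pow_add, ← Module.End.mul_apply,
    ← pow_add, add_comm n k]

theorem sum_range_succ_balayageTerm (N : ℕ) :
    ∑ n ∈ range (N + 1), balayageTerm L c A μ n =
      c • (L (∑ n ∈ range N, balayageTerm L c A μ n)).restrict Aᶜ + μ.restrict A := by
  rw [sum_range_succ', balayageTerm_zero]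
  congr 1
  rw [show (L (∑ n ∈ range N, balayageTerm L c A μ n)).restrict Aᶜ = _ from
    map_sum (Measure.restrictₗ Aᶜ ∘ₗ L) _ _, smul_sum]
  exact sum_congr rfl fun n _ => by rw [balayageTerm_add n 1, pow_one, pow_one]

theorem restrict_le_restrict_balayage : μ.restrict A ≤ (balayage L c A μ).restrict A := by
  calc μ.restrict A = (balayageTerm L c A μ 0).restrict A := by
        rw [balayageTerm_zero, Measure.restrict_restrict_of_subset subset_rfl]
    _ ≤ (balayage L c A μ).restrict A := Measure.restrict_mono subset_rfl (Measure.le_sum _ 0)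

theorem balayage_le (hL : Monotone L) (hA : MeasurableSet A) {ν : Measure X} (hν : c • L ν ≤ ν)
    (hμν : μ.restrict A ≤ ν.restrict A) : balayage L c A μ ≤ ν := by
  refine Measure.sum_le_of_forall_sum_range_le fun N => ?_
  induction N with
  | zero => simp only [range_zero, sum_empty]; exact Measure.zero_le ν
  | succ N ih =>
    calc ∑ n ∈ range (N + 1), balayageTerm L c A μ n
        = c • (L (∑ n ∈ range N, balayageTerm L c A μ n)).restrict Aᶜ + μ.restrict A :=
          sum_range_succ_balayageTerm N
      _ ≤ (c • L ν).restrict Aᶜ + ν.restrict A := by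
          rw [Measure.restrict_smul]; gcongr; exact hL ih
      _ ≤ ν.restrict Aᶜ + ν.restrict A := by gcongr
      _ = ν := Measure.restrict_compl_add_restrict hA

theorem sum_range_balayageTerm_le (hL : Monotone L) (hA : MeasurableSet A) (hμ : c • L μ ≤ μ)
    (N : ℕ) : ∑ n ∈ range N, balayageTerm L c A μ n ≤ μ :=
  (Measure.sum_range_le_sum _ N).trans (balayage_le hL hA hμ le_rfl)

theorem smul_map_sum_range_balayageTerm_le (hL : Monotone L) (hA : MeasurableSet A)
    (hμ : c • L μ ≤ μ) (N : ℕ) :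
    c • L (∑ n ∈ range N, balayageTerm L c A μ n) ≤
      ∑ n ∈ range (N + 1), balayageTerm L c A μ n := by
  set S := ∑ n ∈ range N, balayageTerm L c A μ n
  have hS : c • L S ≤ μ :=
    calc c • L S ≤ c • L μ := by gcongr; exact hL (sum_range_balayageTerm_le hL hA hμ N)
      _ ≤ μ := hμ
  calc c • L S = (c • L S).restrict Aᶜ + (c • L S).restrict A :=
        (Measure.restrict_compl_add_restrict hA).symm
    _ ≤ c • (L S).restrict Aᶜ + μ.restrict A := by
        rw [Measure.restrict_smul]
        exact add_le_add le_rfl (Measure.restrict_mono subset_rfl hS)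
    _ = ∑ n ∈ range (N + 1), balayageTerm L c A μ n := (sum_range_succ_balayageTerm N).symm

theorem sum_balayageTerm_add_le (hL : Monotone L) (hA : MeasurableSet A) (hμ : c • L μ ≤ μ)
    (N : ℕ) : Measure.sum (fun k => balayageTerm L c A μ (k + N)) ≤ c ^ N • (L ^ N) μ := by
  have hD : Monotone (Measure.restrictₗ Aᶜ ∘ₗ L) := fun _ _ h =>
    Measure.restrict_mono subset_rfl (hL h)
  refine Measure.sum_le_of_forall_sum_range_le fun K => ?_
  simp_rw [balayageTerm_add _ N]
  rw [← smul_sum, ← map_sum]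
  gcongr
  rw [Module.End.coe_pow, Module.End.coe_pow]
  exact (hD.iterate N (sum_range_balayageTerm_le hL hA hμ K)).trans
    (hD.iterate_le_of_le (fun _ => Measure.restrict_le_self) N μ)

theorem smul_map_balayage_le (hL : Monotone L) (hA : MeasurableSet A) (hμ : c • L μ ≤ μ)
    (N : ℕ) : c • L (balayage L c A μ) ≤ balayage L c A μ + c ^ (N + 1) • (L ^ (N + 1)) μ := by
  set S := ∑ n ∈ range N, balayageTerm L c A μ n
  set T := Measure.sum (fun k => balayageTerm L c A μ (k + N))
  calc c • L (balayage L c A μ) = c • L S + c • L T := by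
        rw [← smul_add, ← map_add, Measure.sum_range_add_sum_nat_add]; rfl
    _ ≤ balayage L c A μ + c • L (c ^ N • (L ^ N) μ) := by
        gcongr
        · exact (smul_map_sum_range_balayageTerm_le hL hA hμ N).trans
            (Measure.sum_range_le_sum _ _)
        · exact hL (sum_balayageTerm_add_le hL hA hμ N)
    _ = balayage L c A μ + c ^ (N + 1) • (L ^ (N + 1)) μ := by
        rw [map_smul, smul_smul, pow_succ', pow_succ', Module.End.mul_apply]

theorem smul_map_balayage_le_balayage (hL : Monotone L) (hA : MeasurableSet A)
    (hμ : c • L μ ≤ μ) [SigmaFinite (greenMeasure L c μ)] :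
    c • L (balayage L c A μ) ≤ balayage L c A μ := by
  refine Measure.le_of_forall_measure_ne_top_le (greenMeasure L c μ) fun t ht hGt => ?_
  rw [greenMeasure, Measure.sum_apply _ ht] at hGt
  have hvanish : Tendsto (fun N => (c ^ (N + 1) • (L ^ (N + 1)) μ) t) atTop (𝓝 0) :=
    (tendsto_add_atTop_iff_nat 1).2 (ENNReal.tendsto_atTop_zero_of_tsum_ne_top hGt)
  refine ge_of_tendsto (by simpa using tendsto_const_nhds.add hvanish)
    (Eventually.of_forall fun N => ?_)
  simpa using Measure.le_iff'.1 (smul_map_balayage_le hL hA hμ N) t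

end MeasureTheory

/-- **reduced measure.** Let `μ` be `1/r`-excessive for a transient
transfer operator, `0 < r ≤ R`, and `A` a union of `n`-cylinders. With
`𝓕_A = 𝟙_A Σ_n r^n (𝓛_{A^c})^n`, whose dual is
`𝓕_A*(μ) = Σ_n r^n D^n(μ|_A)` with `D(ν) = (𝓛*ν)|_{A^c}`, the reduced measure
`R_A(μ) = ⋀{ ν : ν 1/r-excessive, ν|_A ≥ μ|_A }` equals `𝓕_A*(μ)`; i.e. `𝓕_A*(μ)` is
the least `1/r`-excessive measure dominating `μ` on `A`. -/
theorem reduced_measure_eq_FA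
    {X : Type*} [MeasurableSpace X]
    (Ldual : Measure X → Measure X)
    (hmono : Monotone Ldual)
    (hadd : ∀ μ ν : Measure X, Ldual (μ + ν) = Ldual μ + Ldual ν)
    (hsmul : ∀ (c : ℝ≥0∞) (μ : Measure X), Ldual (c • μ) = c • Ldual μ)
    (r : ℝ) (hr : 0 < r)
    (μ : Measure X)
    (hexc : Ldual μ ≤ (ENNReal.ofReal r)⁻¹ • μ)
    -- transience: the Green measure of μ is σ-finite
    (htrans : SigmaFinite (Measure.sum fun n : ℕ => ENNReal.ofReal (r ^ n) • Ldual^[n] μ))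
    (A : Set X) (hA : MeasurableSet A) :
    (Ldual (Measure.sum fun n : ℕ =>
        ENNReal.ofReal (r ^ n) • (fun ν : Measure X => (Ldual ν).restrict Aᶜ)^[n] (μ.restrict A)) ≤
      (ENNReal.ofReal r)⁻¹ • Measure.sum fun n : ℕ =>
        ENNReal.ofReal (r ^ n) • (fun ν : Measure X => (Ldual ν).restrict Aᶜ)^[n] (μ.restrict A)) ∧
    μ.restrict A ≤ (Measure.sum fun n : ℕ =>
        ENNReal.ofReal (r ^ n) • (fun ν : Measure X => (Ldual ν).restrict Aᶜ)^[n] (μ.restrict A)).restrict A ∧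
    (∀ ν : Measure X, Ldual ν ≤ (ENNReal.ofReal r)⁻¹ • ν → μ.restrict A ≤ ν.restrict A →
      (Measure.sum fun n : ℕ =>
        ENNReal.ofReal (r ^ n) • (fun ν' : Measure X => (Ldual ν').restrict Aᶜ)^[n] (μ.restrict A)) ≤ ν) := by
  let L : Measure X →ₗ[ℝ≥0∞] Measure X := ⟨⟨Ldual, hadd⟩, hsmul⟩
  set c := ENNReal.ofReal r
  have hc0 : c ≠ 0 := (ENNReal.ofReal_pos.2 hr).ne'
  have hexcessive : ∀ ν, Ldual ν ≤ c⁻¹ • ν ↔ c • L ν ≤ ν := fun ν =>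
    (Measure.smul_le_iff_le_inv_smul hc0 ENNReal.ofReal_ne_top).symm
  have hpow : ∀ n, ENNReal.ofReal (r ^ n) = c ^ n := fun n => ENNReal.ofReal_pow hr.le n
  have hF : (Measure.sum fun n => ENNReal.ofReal (r ^ n) •
      (fun ν => (Ldual ν).restrict Aᶜ)^[n] (μ.restrict A)) = balayage L c A μ := by
    have hD : ⇑(Measure.restrictₗ Aᶜ ∘ₗ L) = fun ν => (Ldual ν).restrict Aᶜ :=
      funext fun ν => Measure.restrictₗ_apply _ _
    simp only [hpow]
    exact congrArg Measure.sum (funext fun n => by rw [balayageTerm, Module.End.coe_pow, hD])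
  have : SigmaFinite (greenMeasure L c μ) := by
    simp only [hpow] at htrans
    simp only [greenMeasure, Module.End.coe_pow]
    exact htrans
  rw [hF]
  exact ⟨(hexcessive _).2 (smul_map_balayage_le_balayage hmono hA ((hexcessive μ).1 hexc)),
    restrict_le_restrict_balayage,
    fun ν hν hμν => balayage_le hmono hA ((hexcessive ν).1 hν) hμν⟩
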